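/- arXiv:1003.2117 — 2 statements merged into one kernel-verified Lean document; each statement's English description precedes it below -/
import Mathlib

section
/- Let q be a prime, S a set of primes not containing q, and let M = Z[ r·x : r ∈ Z_⟨S⟩ ] be the subring of the polynomial ring Q[x] consisting of polynomials with coefficients in Z_⟨S⟩ whose constant coefficient is an integer. Then there is no b ∈ M and integer r with 0 ≤ r < q such that x = b·q + r. In particular M does not satisfy Euclidean division by q. -/
/-! The coefficient of `x` in `x = b * q + r` gives `b₁ * q = 1`, so `b₁ = 1 / q`. But a fraction
`a / k` with `k` a product of primes from `S` can only equal `1 / q` if `q ∣ k`, which is impossible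
for a prime `q ∉ S`. -/

theorem Nat.Prime.not_dvd_of_mem_closure {q : ℕ} (hq : q.Prime) {S : Set ℕ}
    (hS : ∀ p ∈ S, ¬ q ∣ p) {k : ℕ} (hk : k ∈ Submonoid.closure S) : ¬ q ∣ k := by
  induction hk using Submonoid.closure_induction with
  | mem p hp => exact hS p hp
  | one => exact hq.not_dvd_one
  | mul m n _ _ hm hn => exact fun hmn => (hq.dvd_mul.mp hmn).elim hm hn

open Polynomial in
theorem Polynomial.coeff_one_mul_eq_one_of_X_eq {R : Type*} [CommSemiring R] {b : R[X]} {c r : R}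
    (h : X = b * C c + C r) : b.coeff 1 * c = 1 := by
  simpa [coeff_C] using (congrArg (coeff · 1) h).symm

theorem Nat.dvd_of_intCast_div_mul_eq_one {a : ℤ} {k q : ℕ} (h : (a : ℚ) / k * q = 1) : q ∣ k := by
  have hk : (k : ℚ) ≠ 0 := by
    intro hk
    simp [hk] at h
  have hkaq : (k : ℤ) = a * q := by
    rw [div_mul_eq_mul_div, div_eq_one_iff_eq hk] at h
    exact_mod_cast h.symm
  exact Int.natCast_dvd_natCast.mp ⟨a, by rw [hkaq, mul_comm]⟩

/-- Let `q` be a prime, `S` a set of primes not containing `q`, and let `M` be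
the subring of `ℚ[x]` of polynomials all of whose coefficients lie in
`ℤ_⟨S⟩ = { a/k : a ∈ ℤ, k ∈ ⟨S⟩ }` and whose constant coefficient is an integer.
Then there is no `b ∈ M` and integer `r` with `0 ≤ r < q` such that
`x = b * q + r`: i.e. `M` does not satisfy Euclidean division by `q`. -/
theorem stmt12 (S : Set ℕ) (hS : ∀ p ∈ S, Nat.Prime p)
    (q : ℕ) (hq : Nat.Prime q) (hqS : q ∉ S) :
    ¬ ∃ (b : Polynomial ℚ) (r : ℤ),
        (∀ i : ℕ, ∃ (a : ℤ) (k : ℕ), k ∈ Submonoid.closure S ∧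
            b.coeff i = (a : ℚ) / (k : ℚ)) ∧
        (∃ m : ℤ, b.coeff 0 = (m : ℚ)) ∧
        0 ≤ r ∧ r < (q : ℤ) ∧
        (Polynomial.X : Polynomial ℚ) = b * (q : Polynomial ℚ) + (r : Polynomial ℚ) := by
  rintro ⟨b, r, hcoeff, -, -, -, hX⟩
  have hS_not_dvd : ∀ p ∈ S, ¬ q ∣ p := fun p hp hqp =>
    hqS ((Nat.prime_dvd_prime_iff_eq hq (hS p hp)).mp hqp ▸ hp)
  obtain ⟨a, k, hk, hb⟩ := hcoeff 1
  have hb_mul : b.coeff 1 * q = 1 :=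
    Polynomial.coeff_one_mul_eq_one_of_X_eq (r := (r : ℚ)) (by rwa [map_natCast, map_intCast])
  exact hq.not_dvd_of_mem_closure hS_not_dvd hk (Nat.dvd_of_intCast_div_mul_eq_one (hb ▸ hb_mul))
end

section
/- Let P be a monic polynomial over Z of degree p+1 with P(0) < 0, and let K be a real closed (or any ordered) field. In the field of formal Puiseux series over K in descending powers of x, for any y ∈ K((x^{1/N})) with P(y/x) ≤ 0 < P((y+1)/x), y/x has degree 0 in x and its constant (leading) coefficient λ ∈ K satisfies P(λ) = 0. -/
/-- Positivity in the ordered field of Puiseux series in descending powers of `x`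
over a linearly ordered field `K`. We model `K((x^{1/ℕ}))` inside `HahnSeries ℚ K`
via `x = single (-1) 1` (so that the Hahn-series exponent `q` corresponds to
`x^{-q}`, exponents of `x` descend along the well-ordered support, and `x` is
infinitely large). A series is positive iff its leading coefficient is positive. -/
def PuiseuxPos {K : Type*} [Field K] [LinearOrder K] [IsStrictOrderedRing K] (s : HahnSeries ℚ K) : Prop :=
  s ≠ 0 ∧ 0 < s.coeff s.order

/-- The Puiseux condition: the support has a common denominator. -/
def IsPuiseuxSeries {K : Type*} [Field K] [LinearOrder K] [IsStrictOrderedRing K] (s : HahnSeries ℚ K) : Prop :=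
  ∃ r : ℕ, 0 < r ∧ ∀ q ∈ s.support, ∃ k : ℤ, q = (k : ℚ) / (r : ℚ)

namespace Stmt15Aux

variable {K : Type*} [Field K] [LinearOrder K] [IsStrictOrderedRing K]

lemma coeff_order_ne_zero {s : HahnSeries ℚ K} (hs : s ≠ 0) : s.coeff s.order ≠ 0 := by
  simpa [HahnSeries.leadingCoeff_eq] using HahnSeries.leadingCoeff_ne_zero.mpr hs

lemma lcoeff_mul {s t : HahnSeries ℚ K} (hs : s ≠ 0) (ht : t ≠ 0) :
    (s * t).coeff (s * t).order = s.coeff s.order * t.coeff t.order := by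
  rw [HahnSeries.order_mul hs ht]
  simpa [HahnSeries.leadingCoeff_eq] using HahnSeries.coeff_mul_order_add_order s t

lemma lcoeff_pow {s : HahnSeries ℚ K} (hs : s ≠ 0) (n : ℕ) :
    (s ^ n).coeff (s ^ n).order = (s.coeff s.order) ^ n := by
  induction n with
  | zero =>
      rw [pow_zero, pow_zero, HahnSeries.order_one, ← HahnSeries.single_zero_one,
        HahnSeries.coeff_single_same]
  | succ n ih =>
      rw [pow_succ, lcoeff_mul (pow_ne_zero n hs) hs, ih, pow_succ]

/-- "Finite" elements: zero or nonnegative order. -/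
def NN (s : HahnSeries ℚ K) : Prop := s = 0 ∨ 0 ≤ s.order

lemma NN_add {s t : HahnSeries ℚ K} (hs : NN s) (ht : NN t) : NN (s + t) := by
  rcases hs with rfl | hs
  · simpa using ht
  rcases ht with rfl | ht
  · rw [add_zero]; exact Or.inr hs
  rcases eq_or_ne (s + t) 0 with h | h
  · exact Or.inl h
  · exact Or.inr (le_trans (le_min hs ht) (HahnSeries.min_order_le_order_add h))

lemma NN_mul {s t : HahnSeries ℚ K} (hs : NN s) (ht : NN t) : NN (s * t) := by
  rcases eq_or_ne s 0 with rfl | hs0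
  · exact Or.inl (by simp)
  rcases eq_or_ne t 0 with rfl | ht0
  · exact Or.inl (by simp)
  have hso := hs.resolve_left hs0
  have hto := ht.resolve_left ht0
  exact Or.inr (by rw [HahnSeries.order_mul hs0 ht0]; exact add_nonneg hso hto)

lemma coeff0_mul {s t : HahnSeries ℚ K} (hs : NN s) (ht : NN t) :
    (s * t).coeff 0 = s.coeff 0 * t.coeff 0 := by
  rcases eq_or_ne s 0 with rfl | hs0
  · simp
  rcases eq_or_ne t 0 with rfl | ht0
  · simp
  have hso := hs.resolve_left hs0
  have hto := ht.resolve_left ht0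
  rcases eq_or_lt_of_le hso with h0s | h0s
  · rcases eq_or_lt_of_le hto with h0t | h0t
    · have h := HahnSeries.coeff_mul_order_add_order s t
      rw [HahnSeries.leadingCoeff_eq, HahnSeries.leadingCoeff_eq] at h
      rw [← h0s, ← h0t] at h
      simpa using h
    · rw [HahnSeries.coeff_eq_zero_of_lt_order (x := t) h0t, mul_zero,
        HahnSeries.coeff_eq_zero_of_lt_order]
      rw [HahnSeries.order_mul hs0 ht0]
      linarith
  · rw [HahnSeries.coeff_eq_zero_of_lt_order (x := s) h0s, zero_mul,
      HahnSeries.coeff_eq_zero_of_lt_order]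
    rw [HahnSeries.order_mul hs0 ht0]
    linarith

lemma intCast_eq_single (n : ℤ) :
    ((n : ℤ) : HahnSeries ℚ K) = HahnSeries.single (0 : ℚ) ((n : K)) := by
  rw [← map_intCast (HahnSeries.C : K →+* HahnSeries ℚ K) n, HahnSeries.C_apply]

lemma NN_intCast (n : ℤ) : NN ((n : ℤ) : HahnSeries ℚ K) := by
  rcases eq_or_ne n 0 with rfl | h
  · exact Or.inl (by simp)
  · refine Or.inr ?_
    rw [intCast_eq_single, HahnSeries.order_single (Int.cast_ne_zero.mpr h)]

lemma coeff0_intCast (n : ℤ) : ((n : ℤ) : HahnSeries ℚ K).coeff 0 = (n : K) := by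
  rw [intCast_eq_single, HahnSeries.coeff_single_same]

lemma NN_pow {s : HahnSeries ℚ K} (hs : NN s) (n : ℕ) : NN (s ^ n) := by
  induction n with
  | zero => rw [pow_zero]; exact Or.inr (by rw [HahnSeries.order_one])
  | succ n ih => rw [pow_succ]; exact NN_mul ih hs

lemma coeff0_pow {s : HahnSeries ℚ K} (hs : NN s) (n : ℕ) :
    (s ^ n).coeff 0 = (s.coeff 0) ^ n := by
  induction n with
  | zero => simp [HahnSeries.coeff_one]
  | succ n ih => rw [pow_succ, coeff0_mul (NN_pow hs n) hs, ih, pow_succ]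

lemma eval_NN (A : Polynomial ℤ) {s : HahnSeries ℚ K} (hs : NN s) :
    NN (Polynomial.eval s (A.map (Int.castRingHom (HahnSeries ℚ K)))) ∧
      (Polynomial.eval s (A.map (Int.castRingHom (HahnSeries ℚ K)))).coeff 0 =
        Polynomial.eval (s.coeff 0) (A.map (Int.castRingHom K)) := by
  induction A using Polynomial.induction_on' with
  | add a b ha hb =>
      simp only [Polynomial.map_add, Polynomial.eval_add]
      exact ⟨NN_add ha.1 hb.1, by rw [HahnSeries.coeff_add, ha.2, hb.2]⟩
  | monomial n c =>
      simp only [Polynomial.map_monomial, Polynomial.eval_monomial, eq_intCast]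
      exact ⟨NN_mul (NN_intCast c) (NN_pow hs n),
        by rw [coeff0_mul (NN_intCast c) (NN_pow hs n), coeff0_intCast, coeff0_pow hs n]⟩

lemma pos_coeff0 {s : HahnSeries ℚ K} (hNN : NN s) (h0 : s.coeff 0 ≠ 0) :
    s ≠ 0 ∧ s.order = 0 ∧ s.coeff s.order = s.coeff 0 := by
  have hs0 : s ≠ 0 := fun h => h0 (by simp [h])
  have h1 : s.order ≤ 0 := HahnSeries.order_le_of_coeff_ne_zero h0
  have h2 : 0 ≤ s.order := hNN.resolve_left hs0
  have h3 : s.order = 0 := le_antisymm h1 h2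
  exact ⟨hs0, h3, by rw [h3]⟩

lemma eval_neg_order {A : Polynomial ℤ} (hA : A.Monic) {d : ℕ} (hd : A.natDegree = d)
    {s : HahnSeries ℚ K} (hs0 : s ≠ 0) (hso : s.order < 0) :
    Polynomial.eval s (A.map (Int.castRingHom (HahnSeries ℚ K))) ≠ 0 ∧
    (Polynomial.eval s (A.map (Int.castRingHom (HahnSeries ℚ K)))).order = d • s.order ∧
    (Polynomial.eval s (A.map (Int.castRingHom (HahnSeries ℚ K)))).coeff (d • s.order) =
      (s.coeff s.order) ^ d := by
  set ψ := Int.castRingHom (HahnSeries ℚ K)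
  set B := A.map ψ with hB
  set o := s.order with ho
  set c := s.coeff s.order with hc
  have hc0 : c ≠ 0 := Stmt15Aux.coeff_order_ne_zero hs0
  have hBdeg : B.natDegree = d := by rw [hB, hA.natDegree_map]; exact hd
  have hsum : Polynomial.eval s B = ∑ i ∈ Finset.range (d + 1), B.coeff i * s ^ i := by
    rw [Polynomial.eval_eq_sum_range, hBdeg]
  have hspow : ∀ i : ℕ, (s ^ i).order = i • o := fun i => HahnSeries.order_pow s i
  have hterm : ∀ i, i < d → ∀ q : ℚ, q ≤ d • o → (B.coeff i * s ^ i).coeff q = 0 := by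
    intro i hi q hq
    rcases eq_or_ne (A.coeff i) 0 with h0 | h0
    · have hz : B.coeff i = 0 := by rw [hB, Polynomial.coeff_map, h0, map_zero]
      rw [hz, zero_mul, HahnSeries.coeff_zero]
    · have hBi : B.coeff i = HahnSeries.single (0 : ℚ) ((A.coeff i : ℤ) : K) := by
        rw [hB, Polynomial.coeff_map]; exact intCast_eq_single _
      have hKne : ((A.coeff i : ℤ) : K) ≠ 0 := Int.cast_ne_zero.mpr h0
      apply HahnSeries.coeff_eq_zero_of_lt_order
      rw [hBi, HahnSeries.order_mul (HahnSeries.single_ne_zero hKne) (pow_ne_zero i hs0),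
        HahnSeries.order_single hKne, hspow i, zero_add]
      calc q ≤ d • o := hq
        _ < i • o := by
            rw [nsmul_eq_mul, nsmul_eq_mul]
            exact mul_lt_mul_of_neg_right (by exact_mod_cast hi) hso
  have hBd : B.coeff d = 1 := by
    have h := (hA.map ψ).coeff_natDegree
    rwa [hBdeg] at h
  have hcoeff_lt : ∀ q : ℚ, q < d • o → (Polynomial.eval s B).coeff q = 0 := by
    intro q hq
    rw [hsum]
    have hmap : (∑ i ∈ Finset.range (d + 1), B.coeff i * s ^ i).coeff q
        = ∑ i ∈ Finset.range (d + 1), (B.coeff i * s ^ i).coeff q :=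
      map_sum (HahnSeries.coeff.addMonoidHom q) _ _
    rw [hmap]
    apply Finset.sum_eq_zero
    intro i hi
    rcases eq_or_lt_of_le (Nat.lt_succ_iff.mp (Finset.mem_range.mp hi)) with h | h
    · subst h
      rw [hBd, one_mul]
      exact HahnSeries.coeff_eq_zero_of_lt_order (by rw [hspow]; exact hq)
    · exact hterm i h q hq.le
  have hcoeff_d : (Polynomial.eval s B).coeff (d • o) = c ^ d := by
    rw [hsum]
    have hmap : (∑ i ∈ Finset.range (d + 1), B.coeff i * s ^ i).coeff (d • o)
        = ∑ i ∈ Finset.range (d + 1), (B.coeff i * s ^ i).coeff (d • o) :=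
      map_sum (HahnSeries.coeff.addMonoidHom (d • o)) _ _
    rw [hmap, Finset.sum_eq_single d]
    · rw [hBd, one_mul, ← hspow d]
      exact lcoeff_pow hs0 d
    · intro i hi hne
      exact hterm i (lt_of_le_of_ne (Nat.lt_succ_iff.mp (Finset.mem_range.mp hi)) hne) _ le_rfl
    · intro h
      exact absurd (Finset.self_mem_range_succ d) h
  have hE0 : Polynomial.eval s B ≠ 0 := fun h =>
    (pow_ne_zero d hc0) (by rw [← hcoeff_d, h, HahnSeries.coeff_zero])
  have hord : (Polynomial.eval s B).order = d • o := by
    refine le_antisymm (HahnSeries.order_le_of_coeff_ne_zero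
      (by rw [hcoeff_d]; exact pow_ne_zero d hc0)) ?_
    by_contra h
    push_neg at h
    exact Stmt15Aux.coeff_order_ne_zero hE0 (hcoeff_lt _ h)
  exact ⟨hE0, hord, hcoeff_d⟩

lemma puiseuxPos_single_mul {a : ℚ} {t : HahnSeries ℚ K} :
    PuiseuxPos (HahnSeries.single a (1 : K) * t) ↔ PuiseuxPos t := by
  rcases eq_or_ne t 0 with rfl | ht
  · simp [PuiseuxPos]
  have h1 : (HahnSeries.single a (1 : K)) ≠ 0 := HahnSeries.single_ne_zero one_ne_zero
  have hmul : HahnSeries.single a (1 : K) * t ≠ 0 := mul_ne_zero h1 ht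
  have hc := lcoeff_mul h1 ht
  rw [HahnSeries.order_single (one_ne_zero (α := K)), HahnSeries.coeff_single_same, one_mul] at hc
  constructor
  · rintro ⟨-, h⟩
    exact ⟨ht, hc ▸ h⟩
  · rintro ⟨-, h⟩
    exact ⟨hmul, hc ▸ h⟩

end Stmt15Aux

open Stmt15Aux in
/-- Let `P` be a monic integer polynomial of degree `p+1` with `P(0) < 0`, let `K`
be a linearly ordered field, and work in the field of Puiseux series `K((x^{1/ℕ}))`
(with `x` infinitely large), modelled inside `HahnSeries ℚ K` with `x = single (-1) 1`.
Set `Q(y) := x^{p+1}·P(y/x)`. If `y` is a Puiseux series with `Q(y) ≤ 0 < Q(y+1)`,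
then `y/x` has degree `0` in `x` (its leading exponent is `0`), and its leading
coefficient `λ = (y/x).coeff 0 ∈ K` satisfies `P(λ) = 0`. -/
theorem stmt15 (K : Type*) [Field K] [LinearOrder K] [IsStrictOrderedRing K] (p : ℕ)
    (P : Polynomial ℤ) (hmonic : P.Monic) (hdeg : P.natDegree = p + 1)
    (hP0 : P.eval 0 < 0)
    (y : HahnSeries ℚ K) (hy : IsPuiseuxSeries y)
    (x : HahnSeries ℚ K) (hx : x = HahnSeries.single (-1 : ℚ) (1 : K))
    (Q : HahnSeries ℚ K → HahnSeries ℚ K)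
    (hQ : ∀ u : HahnSeries ℚ K,
      Q u = x ^ (p + 1) *
        Polynomial.eval (u / x) (P.map (Int.castRingHom (HahnSeries ℚ K))))
    (hle : Q y = 0 ∨ PuiseuxPos (-(Q y)))
    (hgt : PuiseuxPos (Q (y + 1))) :
    (y / x).order = 0 ∧
      Polynomial.eval ((y / x).coeff 0) (P.map (Int.castRingHom K)) = 0 := by
  classical
  set ψ := Int.castRingHom (HahnSeries ℚ K) with hψ
  set ψK := Int.castRingHom K with hψK
  set z := y / x with hz
  set ε : HahnSeries ℚ K := HahnSeries.single (1 : ℚ) (1 : K) with hε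
  have hx0 : x ≠ 0 := by rw [hx]; exact HahnSeries.single_ne_zero one_ne_zero
  have hxe : x * ε = 1 := by
    rw [hx, hε, HahnSeries.single_mul_single, one_mul]
    norm_num [HahnSeries.single_zero_one]
  have hinv : x⁻¹ = ε := inv_eq_of_mul_eq_one_right hxe
  have hdiv : (y + 1) / x = z + ε := by
    rw [add_div, hz, one_div, hinv]
  have hxp : x ^ (p + 1) = HahnSeries.single ((p + 1) • (-1 : ℚ)) (1 : K) := by
    rw [hx, HahnSeries.single_pow, one_pow]
  have hgt' : PuiseuxPos (Polynomial.eval (z + ε) (P.map ψ)) := by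
    have h := hgt
    rw [hQ, hdiv, hxp] at h
    exact puiseuxPos_single_mul.mp h
  have hle' : Polynomial.eval z (P.map ψ) = 0 ∨
      PuiseuxPos (-(Polynomial.eval z (P.map ψ))) := by
    rcases hle with h | h
    · left
      rw [hQ, ← hz] at h
      rcases mul_eq_zero.mp h with h' | h'
      · exact absurd h' (pow_ne_zero _ hx0)
      · exact h'
    · right
      have h2 : -(Q y) = HahnSeries.single ((p + 1) • (-1 : ℚ)) (1 : K) *
          (-(Polynomial.eval z (P.map ψ))) := by
        rw [hQ, ← hz, hxp]
        ring
      rw [h2] at h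
      exact puiseuxPos_single_mul.mp h
  have hεNN : NN ε := by
    refine Or.inr ?_
    rw [hε, HahnSeries.order_single (one_ne_zero (α := K))]
    norm_num
  have hεc : ε.coeff 0 = 0 := by
    rw [hε]
    exact HahnSeries.coeff_single_of_ne (by norm_num)
  have hP0K : Polynomial.eval (0 : K) (P.map ψK) < 0 := by
    rw [Polynomial.eval_map, Polynomial.eval₂_at_zero, Polynomial.coeff_zero_eq_eval_zero]
    have : ((P.eval 0 : ℤ) : K) < 0 := by exact_mod_cast hP0
    simpa using this
  -- infinitesimal case is impossible
  have hcase_inf : ¬(z = 0 ∨ 0 < z.order) := by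
    intro hcz
    have hzNN : NN z := hcz.imp id le_of_lt
    have hz0c : z.coeff 0 = 0 := by
      rcases hcz with h | hlt
      · rw [h, HahnSeries.coeff_zero]
      · exact HahnSeries.coeff_eq_zero_of_lt_order hlt
    obtain ⟨hENN, hEc⟩ := eval_NN P (NN_add hzNN hεNN)
    rw [HahnSeries.coeff_add, hz0c, hεc, add_zero] at hEc
    have hne : (Polynomial.eval (z + ε) (P.map ψ)).coeff 0 ≠ 0 := by
      rw [hEc]; exact ne_of_lt hP0K
    obtain ⟨hE0, hEord, hElc⟩ := pos_coeff0 hENN hne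
    have h := hgt'.2
    rw [hElc, hEc] at h
    linarith
  -- negative order case is impossible
  have hcase_neg : ¬ z.order < 0 := by
    intro ho
    have hz0 : z ≠ 0 := by
      intro h
      rw [h, HahnSeries.order_zero] at ho
      exact lt_irrefl 0 ho
    have hc0 : z.coeff z.order ≠ 0 := Stmt15Aux.coeff_order_ne_zero hz0
    -- z + ε has the same order and leading coefficient as z
    have hlt : z.orderTop < ε.orderTop := by
      rw [← HahnSeries.order_eq_orderTop_of_ne_zero hz0, hε,
        HahnSeries.orderTop_single (one_ne_zero (α := K))]
      exact_mod_cast lt_trans ho one_pos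
    have hzεtop : (z + ε).orderTop = z.orderTop := HahnSeries.orderTop_add_eq_left hlt
    have hzε0 : z + ε ≠ 0 := by
      intro h
      rw [h, HahnSeries.orderTop_zero, ← HahnSeries.order_eq_orderTop_of_ne_zero hz0] at hzεtop
      exact (WithTop.coe_ne_top hzεtop.symm).elim
    have hzεord : (z + ε).order = z.order := by
      have h := hzεtop
      rw [← HahnSeries.order_eq_orderTop_of_ne_zero hzε0,
        ← HahnSeries.order_eq_orderTop_of_ne_zero hz0] at h
      exact_mod_cast h
    have hzεlc : (z + ε).coeff ((z + ε).order) = z.coeff z.order := by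
      have h := HahnSeries.leadingCoeff_add_eq_left hlt
      rwa [HahnSeries.leadingCoeff_eq, HahnSeries.leadingCoeff_eq] at h
    obtain ⟨hE0', hord', hcoeff'⟩ :=
      eval_neg_order (K := K) hmonic hdeg hzε0 (by rw [hzεord]; exact ho)
    obtain ⟨hF0, hFord, hFcoeff⟩ := eval_neg_order (K := K) hmonic hdeg hz0 ho
    have hpos : 0 < (z.coeff z.order) ^ (p + 1) := by
      have h := hgt'.2
      rw [hord', hcoeff', hzεlc] at h
      exact h
    have hF := hle'.resolve_left hF0
    have hneg : 0 < -((z.coeff z.order) ^ (p + 1)) := by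
      have h := hF.2
      rw [HahnSeries.order_neg, HahnSeries.coeff_neg, hFord, hFcoeff] at h
      exact h
    linarith
  push_neg at hcase_inf
  obtain ⟨hz0, hordle⟩ := hcase_inf
  have hord : z.order = 0 := le_antisymm hordle (not_lt.mp hcase_neg)
  refine ⟨hord, ?_⟩
  by_contra hne
  have hzNN : NN z := Or.inr hord.ge
  obtain ⟨hENN, hEc⟩ := eval_NN P (NN_add hzNN hεNN)
  rw [HahnSeries.coeff_add, hεc, add_zero] at hEc
  obtain ⟨hE0, hEord, hElc⟩ := pos_coeff0 hENN (by rw [hEc]; exact hne)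
  have hpos : 0 < Polynomial.eval (z.coeff 0) (P.map ψK) := by
    have h := hgt'.2
    rw [hElc, hEc] at h
    exact h
  obtain ⟨hFNN, hFc⟩ := eval_NN P hzNN
  have hFne : Polynomial.eval z (P.map ψ) ≠ 0 := by
    intro h
    rw [h, HahnSeries.coeff_zero] at hFc
    exact hne hFc.symm
  have hF := hle'.resolve_left hFne
  obtain ⟨-, hFord, hFlc⟩ := pos_coeff0 hFNN (by rw [hFc]; exact hne)
  have hneg : 0 < -Polynomial.eval (z.coeff 0) (P.map ψK) := by
    have h := hF.2
    rw [HahnSeries.order_neg, HahnSeries.coeff_neg, hFlc, hFc] at h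
    exact h
  linarith
end
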